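/- arXiv:1104.3301 — 2 statements merged into one kernel-verified Lean document; each statement's English description precedes it below -/
import Mathlib

section
/- Let U ⊆ ℝ × ℝ³ be open and let d : ℝ × ℝ³ → ℝ³ and u : ℝ × ℝ³ → ℝ³ be such that d is continuously differentiable in the time variable t and twice continuously differentiable in the space variable x on U. Assume that on U the pair solves the harmonic map heat flow equation ∂ₜd − Δd − |∇d|²d + (u·∇)d = 0, where Δ and ∇ act in the space variables only, |∇d|² = Σᵢ ‖∂ᵢd‖², and (u·∇)d = Σᵢ uᵢ ∂ᵢd. Then the scalar function f(t,x) = ‖d(t,x)‖² − 1 satisfies, at every point of U, the linear parabolic equation ∂ₜf − Δf − 2|∇d|² f + (u·∇)f = 0. -/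
open scoped BigOperators

noncomputable section

/-- Time derivative `∂ₜ g` of a function of `(t, x) ∈ ℝ × ℝ³`. -/
def pt {F : Type*} [NormedAddCommGroup F] [NormedSpace ℝ F]
    (g : ℝ × EuclideanSpace ℝ (Fin 3) → F) (p : ℝ × EuclideanSpace ℝ (Fin 3)) : F :=
  deriv (fun s => g (s, p.2)) p.1

/-- Spatial partial derivative `∂ᵢ g` of a function of `(t, x) ∈ ℝ × ℝ³`,
in the standard direction `eᵢ`. -/
def pd {F : Type*} [NormedAddCommGroup F] [NormedSpace ℝ F]
    (g : ℝ × EuclideanSpace ℝ (Fin 3) → F) (i : Fin 3)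
    (p : ℝ × EuclideanSpace ℝ (Fin 3)) : F :=
  fderiv ℝ (fun y => g (p.1, y)) p.2 (EuclideanSpace.single i 1)

/-! Differentiating `‖d‖² − 1` gives `∂(‖d‖² − 1) = 2⟪d, ∂d⟫` in every direction and, once more in
space, `Δ(‖d‖² − 1) = 2|∇d|² + 2⟪d, Δd⟫`. So the left-hand side of the equation for `f = ‖d‖² − 1`
is `2⟪d, ∂ₜd − Δd − |∇d|²d + (u·∇)d⟫`, which vanishes: the terms `−2|∇d|²` and
`−2|∇d|²(‖d‖² − 1)` add up to `−2|∇d|²‖d‖² = −2⟪d, |∇d|²d⟫`. -/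

open RealInnerProductSpace Filter Topology

section NormedSpace

variable {F : Type*} [NormedAddCommGroup F] [NormedSpace ℝ F]
  {g h : ℝ × EuclideanSpace ℝ (Fin 3) → F} {p : ℝ × EuclideanSpace ℝ (Fin 3)} (i : Fin 3)

theorem pd_congr_of_eventuallyEq (hgh : g =ᶠ[𝓝 p] h) : pd g i p = pd h i p := by
  have hslice : (fun y => g (p.1, y)) =ᶠ[𝓝 p.2] fun y => h (p.1, y) :=
    ((Continuous.prodMk_right p.1).tendsto' _ _ rfl).eventually hgh
  rw [pd, pd, hslice.fderiv_eq]

theorem differentiableAt_pd_of_contDiffAt (hg : ContDiffAt ℝ 2 (fun y => g (p.1, y)) p.2) :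
    DifferentiableAt ℝ (fun y => pd g i (p.1, y)) p.2 :=
  ((hg.fderiv_right le_rfl).differentiableAt one_ne_zero).clm_apply (differentiableAt_const _)

end NormedSpace

theorem pd_const_mul {g : ℝ × EuclideanSpace ℝ (Fin 3) → ℝ} {p : ℝ × EuclideanSpace ℝ (Fin 3)}
    (i : Fin 3) (c : ℝ) : pd (fun q => c * g q) i p = c * pd g i p := by
  show fderiv ℝ (c • fun y => g (p.1, y)) p.2 _ = _
  rw [fderiv_const_smul_field]
  rfl

section InnerProductSpace

variable {F : Type*} [NormedAddCommGroup F] [InnerProductSpace ℝ F]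
  {g h : ℝ × EuclideanSpace ℝ (Fin 3) → F} {p : ℝ × EuclideanSpace ℝ (Fin 3)} (i : Fin 3)

theorem pt_norm_sq_sub_one (hg : DifferentiableAt ℝ (fun s => g (s, p.2)) p.1) :
    pt (fun q => ‖g q‖ ^ 2 - 1) p = 2 * ⟪g p, pt g p⟫ :=
  (hg.hasDerivAt.norm_sq.sub_const 1).deriv

theorem pd_norm_sq_sub_one (hg : DifferentiableAt ℝ (fun y => g (p.1, y)) p.2) :
    pd (fun q => ‖g q‖ ^ 2 - 1) i p = 2 * ⟪g p, pd g i p⟫ := by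
  rw [pd, (hg.hasFDerivAt.norm_sq.sub_const 1).fderiv]
  simp [pd]

theorem pd_inner (hg : DifferentiableAt ℝ (fun y => g (p.1, y)) p.2)
    (hh : DifferentiableAt ℝ (fun y => h (p.1, y)) p.2) :
    pd (fun q => ⟪g q, h q⟫) i p = ⟪g p, pd h i p⟫ + ⟪pd g i p, h p⟫ :=
  fderiv_inner_apply ℝ hg hh _

theorem pd_pd_norm_sq_sub_one (hg : ∀ᶠ q in 𝓝 p, DifferentiableAt ℝ (fun y => g (q.1, y)) q.2)
    (hg' : DifferentiableAt ℝ (fun y => pd g i (p.1, y)) p.2) :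
    pd (pd (fun q => ‖g q‖ ^ 2 - 1) i) i p = 2 * (⟪g p, pd (pd g i) i p⟫ + ‖pd g i p‖ ^ 2) := by
  have hfirst : pd (fun q => ‖g q‖ ^ 2 - 1) i =ᶠ[𝓝 p] fun q => 2 * ⟪g q, pd g i q⟫ :=
    hg.mono fun q hq => pd_norm_sq_sub_one i hq
  rw [pd_congr_of_eventuallyEq i hfirst, pd_const_mul, pd_inner i hg.self_of_nhds hg',
    real_inner_self_eq_norm_sq]

end InnerProductSpace

/-- If `d` is `C¹` in time and `C²` in space on an open set
`U ⊆ ℝ × ℝ³` and solves `∂ₜd − Δd − |∇d|²d + (u·∇)d = 0` on `U`, then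
`f = ‖d‖² − 1` solves the linear parabolic equation
`∂ₜf − Δf − 2|∇d|²f + (u·∇)f = 0` on `U`. -/
theorem norm_sq_sub_one_parabolic
    (U : Set (ℝ × EuclideanSpace ℝ (Fin 3))) (hU : IsOpen U)
    (d u : ℝ × EuclideanSpace ℝ (Fin 3) → EuclideanSpace ℝ (Fin 3))
    (hdt : ∀ p ∈ U, ContDiffAt ℝ 1 (fun s => d (s, p.2)) p.1)
    (hdx : ∀ p ∈ U, ContDiffAt ℝ 2 (fun y => d (p.1, y)) p.2)
    (hpde : ∀ p ∈ U,
      pt d p - (∑ i, pd (pd d i) i p) - (∑ i, ‖pd d i p‖ ^ 2) • d p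
        + (∑ i, u p i • pd d i p) = 0) :
    ∀ p ∈ U,
      pt (fun q => ‖d q‖ ^ 2 - 1) p
        - (∑ i, pd (pd (fun q => ‖d q‖ ^ 2 - 1) i) i p)
        - 2 * (∑ i, ‖pd d i p‖ ^ 2) * (‖d p‖ ^ 2 - 1)
        + (∑ i, u p i • pd (fun q => ‖d q‖ ^ 2 - 1) i p) = 0 := by
  intro p hp
  have hd_near : ∀ᶠ q in 𝓝 p, DifferentiableAt ℝ (fun y => d (q.1, y)) q.2 :=
    eventually_of_mem (hU.mem_nhds hp) fun q hq => (hdx q hq).differentiableAt two_ne_zero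
  rw [pt_norm_sq_sub_one ((hdt p hp).differentiableAt one_ne_zero)]
  simp only [pd_norm_sq_sub_one _ hd_near.self_of_nhds,
    pd_pd_norm_sq_sub_one _ hd_near (differentiableAt_pd_of_contDiffAt _ (hdx p hp)),
    smul_eq_mul, mul_left_comm (u p _) 2, ← Finset.mul_sum, Finset.sum_add_distrib]
  have hpde_d : ⟪d p, pt d p - (∑ i, pd (pd d i) i p) - (∑ i, ‖pd d i p‖ ^ 2) • d p
      + (∑ i, u p i • pd d i p)⟫ = 0 := by
    rw [hpde p hp, inner_zero_right]
  simp only [inner_add_right, inner_sub_right, inner_smul_right, inner_sum,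
    real_inner_self_eq_norm_sq] at hpde_d
  linear_combination 2 * hpde_d
end
end

section
/- Let C > 0 and a ≥ 0 be real numbers with 32C²a ≤ 1, let T > 0 (possibly T = ∞), and let f : ℝ → ℝ be continuous and nonnegative on [0,T). Assume that f(t) ≤ C(a + 4f(t)²) for all t ∈ [0,T), and that f(0) ≤ 2Ca. Then for every t ∈ [0,T) one has f(t) ≤ (1 − √(1 − 16C²a))/(8C), and in particular f(t) ≤ 2Ca. -/
/-!
The inequality `y ≤ C (a + 4 y²)` says `4C (y - y₋)(y - y₊) ≥ 0`, where
`y₋ ≤ 2Ca < y₊` are the roots of `4C y² - y + Ca`; so `f` never takes values in the gap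
`(y₋, y₊)`. Since `f` is continuous on an interval and starts below the gap, it stays below it.
-/

theorem IsPreconnected.forall_le_of_forall_le_or_ge {α β : Type*} [TopologicalSpace α]
    [LinearOrder β] [DenselyOrdered β] [TopologicalSpace β] [OrderClosedTopology β]
    {s : Set α} {f : α → β} {l u : β} {x₀ : α} (hs : IsPreconnected s) (hf : ContinuousOn f s)
    (hlu : l < u) (hgap : ∀ x ∈ s, f x ≤ l ∨ u ≤ f x) (hx₀ : x₀ ∈ s) (h₀ : f x₀ ≤ l) :
    ∀ x ∈ s, f x ≤ l := by
  intro x hx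
  refine (hgap x hx).resolve_right fun hux => ?_
  obtain ⟨m, hlm, hmu⟩ := exists_between hlu
  obtain ⟨y, hy, rfl⟩ := hs.intermediate_value hx₀ hx hf ⟨h₀.trans hlm.le, hmu.le.trans hux⟩
  rcases hgap y hy with h | h
  · exact h.not_gt hlm
  · exact h.not_gt hmu

theorem le_or_ge_of_le_quadratic {C a y : ℝ} (hC : 0 < C) (hD : 0 ≤ 1 - 16 * C ^ 2 * a)
    (hy : y ≤ C * (a + 4 * y ^ 2)) :
    y ≤ (1 - √(1 - 16 * C ^ 2 * a)) / (8 * C) ∨ (1 + √(1 - 16 * C ^ 2 * a)) / (8 * C) ≤ y := by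
  set s := √(1 - 16 * C ^ 2 * a)
  have hs : s ^ 2 = 1 - 16 * C ^ 2 * a := Real.sq_sqrt hD
  have hfactor : 0 ≤ (8 * C * y - (1 - s)) * (8 * C * y - (1 + s)) := by nlinarith
  rw [div_le_iff₀ (by positivity), le_div_iff₀ (by positivity)]
  by_contra! h
  nlinarith [mul_pos (sub_pos.2 h.1) (sub_pos.2 h.2)]

theorem quadratic_small_root_le {C a : ℝ} (hC : 0 < C) (ha : 0 ≤ a)
    (hD : 0 ≤ 1 - 16 * C ^ 2 * a) : (1 - √(1 - 16 * C ^ 2 * a)) / (8 * C) ≤ 2 * C * a := by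
  have hs : √(1 - 16 * C ^ 2 * a) ^ 2 = 1 - 16 * C ^ 2 * a := Real.sq_sqrt hD
  have hs_le : √(1 - 16 * C ^ 2 * a) ≤ 1 :=
    Real.sqrt_le_one.2 (by nlinarith [sq_nonneg C])
  rw [div_le_iff₀ (by positivity)]
  nlinarith [Real.sqrt_nonneg (1 - 16 * C ^ 2 * a)]

theorem lt_quadratic_large_root {C a : ℝ} (hC : 0 < C) (hD : 0 < 1 - 16 * C ^ 2 * a) :
    2 * C * a < (1 + √(1 - 16 * C ^ 2 * a)) / (8 * C) := by
  rw [lt_div_iff₀ (by positivity)]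
  nlinarith [Real.sqrt_nonneg (1 - 16 * C ^ 2 * a)]

theorem ordConnected_Ici_inter_coe_lt (T : EReal) :
    Set.OrdConnected {t : ℝ | 0 ≤ t ∧ (t : EReal) < T} :=
  ⟨fun _ hx _ hy _ hz => ⟨hx.1.trans hz.1, (EReal.coe_le_coe_iff.2 hz.2).trans_lt hy.2⟩⟩

theorem bootstrap_lemma_general
    (C a : ℝ) (hC : 0 < C) (ha : 0 ≤ a) (hsmall : 32 * C ^ 2 * a ≤ 1)
    (T : EReal) (hT : 0 < T) (f : ℝ → ℝ)
    (hf : ContinuousOn f {t : ℝ | 0 ≤ t ∧ (t : EReal) < T})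
    (hquad : ∀ t : ℝ, 0 ≤ t → (t : EReal) < T → f t ≤ C * (a + 4 * f t ^ 2))
    (h0 : f 0 ≤ 2 * C * a) :
    ∀ t : ℝ, 0 ≤ t → (t : EReal) < T →
      f t ≤ (1 - Real.sqrt (1 - 16 * C ^ 2 * a)) / (8 * C) ∧ f t ≤ 2 * C * a := by
  have hD : 0 < 1 - 16 * C ^ 2 * a := by nlinarith [sq_nonneg C]
  have hsmall_root := quadratic_small_root_le hC ha hD.le
  have hlarge_root := lt_quadratic_large_root hC hD
  have hgap : ∀ t ∈ {t : ℝ | 0 ≤ t ∧ (t : EReal) < T},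
      f t ≤ (1 - √(1 - 16 * C ^ 2 * a)) / (8 * C) ∨
        (1 + √(1 - 16 * C ^ 2 * a)) / (8 * C) ≤ f t :=
    fun t ht => le_or_ge_of_le_quadratic hC hD.le (hquad t ht.1 ht.2)
  have hzero : (0 : ℝ) ∈ {t : ℝ | 0 ≤ t ∧ (t : EReal) < T} := ⟨le_rfl, by simpa using hT⟩
  have hf0 := (hgap 0 hzero).resolve_right (by linarith)
  intro t ht htT
  have hft := (ordConnected_Ici_inter_coe_lt T).isPreconnected.forall_le_of_forall_le_or_ge
    hf (hsmall_root.trans_lt hlarge_root) hgap hzero hf0 t ⟨ht, htT⟩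
  exact ⟨hft, hft.trans hsmall_root⟩

/-- Bootstrap (continuation) lemma: let `C > 0`, `a ≥ 0` with
`32C²a ≤ 1`, `T > 0` (possibly `T = ∞`, modeled as `T : EReal`), and let
`f : ℝ → ℝ` be continuous and nonnegative on `[0, T)`. If `f t ≤ C(a + 4 f t²)`
on `[0, T)` and `f 0 ≤ 2Ca`, then `f t ≤ (1 − √(1 − 16C²a))/(8C)` on `[0, T)`,
and in particular `f t ≤ 2Ca`. -/
theorem bootstrap_lemma
    (C a : ℝ) (hC : 0 < C) (ha : 0 ≤ a) (hsmall : 32 * C ^ 2 * a ≤ 1)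
    (T : EReal) (hT : 0 < T) (f : ℝ → ℝ)
    (hf : ContinuousOn f {t : ℝ | 0 ≤ t ∧ (t : EReal) < T})
    (hnonneg : ∀ t : ℝ, 0 ≤ t → (t : EReal) < T → 0 ≤ f t)
    (hquad : ∀ t : ℝ, 0 ≤ t → (t : EReal) < T → f t ≤ C * (a + 4 * f t ^ 2))
    (h0 : f 0 ≤ 2 * C * a) :
    ∀ t : ℝ, 0 ≤ t → (t : EReal) < T →
      f t ≤ (1 - Real.sqrt (1 - 16 * C ^ 2 * a)) / (8 * C) ∧ f t ≤ 2 * C * a :=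
  bootstrap_lemma_general C a hC ha hsmall T hT f hf hquad h0
end
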